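/- arXiv:1608.00442 — 8 statements merged into one kernel-verified Lean document; each statement's English description precedes it below -/
import Mathlib

section
/- Let k ≥ 1 and let C > 0. There exists ρ > 0, depending only on C (and k), such that for every holomorphic map Φ : B^k → ℂ^k with Φ(0) = 0, Φ'(0) = Id, for every z ∈ B^k the derivative Φ'(z) invertible and ‖Φ'(z)‖ · ‖Φ'(z)⁻¹‖ ≤ C, the image Φ(B^k) contains some open Euclidean ball of radius ρ. -/
/-!
Pick `a` with `‖a‖ ≤ 1/2` maximizing `(1/2 - ‖z‖) ‖Φ'(z)‖`. Its value at `z = 0` is `1/2`, so with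
`d = 1/2 - ‖a‖` and `M = ‖Φ'(a)‖` we get `dM ≥ 1/2` and `‖Φ'‖ ≤ 2M` on `B(a, d/2)`. Schwarz's lemma,
applied to difference quotients of `Φ`, makes `Φ'` Lipschitz with constant `O(M/d)` on `B(a, d/4)`,
so `Φ` stays within `M/(2C)` of the linear map `Φ'(a)` on a ball of radius `d/(32C)`. Since
`‖Φ'(a)⁻¹‖ ≤ C/M`, the quantitative inverse function theorem puts a ball of radius
`dM/(64C²) ≥ 1/(128C²)` into the image.
-/

open Metric Set Filter Topology

section InverseFunction

variable {𝕜 E F : Type*} [RCLike 𝕜] [NormedAddCommGroup E] [NormedSpace 𝕜 E] [NormedSpace ℝ E]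
  [CompleteSpace E] [NormedAddCommGroup F] [NormedSpace 𝕜 F]

theorem closedBall_subset_image_of_norm_fderiv_sub_le {f : E → F} (e : E ≃L[𝕜] F) {a : E}
    {r c : ℝ} (hr : 0 ≤ r) (hf : ∀ z ∈ closedBall a r, DifferentiableAt 𝕜 f z)
    (hc : ∀ z ∈ closedBall a r, ‖fderiv 𝕜 f z - e‖ ≤ c) :
    closedBall (f a) ((‖(e.symm : F →L[𝕜] E)‖⁻¹ - c) * r) ⊆ f '' closedBall a r := by
  have hc₀ : 0 ≤ c := (norm_nonneg _).trans (hc a (mem_closedBall_self hr))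
  have happrox : ApproximatesLinearOn f (e : E →L[𝕜] F) (closedBall a r) ⟨c, hc₀⟩ :=
    fun x hx y hy => (convex_closedBall a r).norm_image_sub_le_of_norm_fderiv_le' hf hc hy hx
  exact happrox.surjOn_closedBall_of_nonlinearRightInverse e.toNonlinearRightInverse hr
    subset_rfl

end InverseFunction

section Holomorphic

variable {E F : Type*} [NormedAddCommGroup E] [NormedSpace ℂ E]
  [NormedAddCommGroup F] [NormedSpace ℂ F]

theorem norm_fderiv_sub_fderiv_le_of_norm_fderiv_le {Φ : E → F} {b ζ : E} {R M : ℝ}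
    (hd : DifferentiableOn ℂ Φ (ball b (2 * R))) (hM : ∀ z ∈ ball b (2 * R), ‖fderiv ℂ Φ z‖ ≤ M)
    (hζ : ζ ∈ ball b R) :
    ‖fderiv ℂ Φ ζ - fderiv ℂ Φ b‖ ≤ 2 * M / R * ‖ζ - b‖ := by
  have hR : 0 < R := pos_of_mem_ball hζ
  have hsub : ball b R ⊆ ball b (2 * R) := ball_subset_ball (by linarith)
  have hdiff : ∀ z ∈ ball b (2 * R), DifferentiableAt ℂ Φ z :=
    fun z hz => hd.differentiableAt (isOpen_ball.mem_nhds hz)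
  have hM₀ : 0 ≤ M := (norm_nonneg _).trans (hM b (mem_ball_self (by positivity)))
  refine ContinuousLinearMap.opNorm_le_bound _ (by positivity) fun v => ?_
  -- Schwarz's lemma bounds the oscillation of each difference quotient `D h`, uniformly in `h`.
  set D : ℂ → E → F := fun h z => h⁻¹ • (Φ (z + h • v) - Φ z)
  have hD : ∀ h : ℂ, h ≠ 0 → ‖h‖ * ‖v‖ < R →
      dist (D h ζ) (D h b) ≤ 2 * M * ‖v‖ / R * dist ζ b := by
    intro h hh hhv
    have hshift : ∀ z ∈ ball b R, z + h • v ∈ ball b (2 * R) := fun z hz => by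
      rw [mem_ball, dist_eq_norm, add_sub_right_comm, two_mul]
      exact (norm_add_le _ _).trans_lt (add_lt_add (mem_ball_iff_norm.1 hz)
        (by rwa [norm_smul]))
    have hDd : DifferentiableOn ℂ (D h) (ball b R) := fun z hz =>
      (((hdiff _ (hshift z hz)).comp z (differentiableAt_id.add_const _)).sub
        (hdiff z (hsub hz))).const_smul _ |>.differentiableWithinAt
    have hDb : ∀ z ∈ ball b R, ‖D h z‖ ≤ M * ‖v‖ := fun z hz => by
      have := (convex_ball b (2 * R)).norm_image_sub_le_of_norm_fderiv_le hdiff hM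
        (hsub hz) (hshift z hz)
      rw [add_sub_cancel_left, norm_smul] at this
      rw [norm_smul, norm_inv, inv_mul_le_iff₀ (norm_pos_iff.2 hh)]
      linarith
    refine Complex.dist_le_div_mul_dist_of_mapsTo_ball (R₂ := 2 * M * ‖v‖) hDd (fun z hz => ?_) hζ
    rw [mem_closedBall, dist_eq_norm]
    linarith [norm_sub_le (D h z) (D h b), hDb z hz, hDb b (mem_ball_self hR)]
  have hlim : Tendsto (fun h => dist (D h ζ) (D h b)) (𝓝[≠] 0)
      (𝓝 (dist (fderiv ℂ Φ ζ v) (fderiv ℂ Φ b v))) :=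
    ((hdiff ζ (hsub hζ)).hasFDerivAt.hasLineDerivAt v).tendsto_slope_zero.dist
      ((hdiff b (mem_ball_self (by positivity))).hasFDerivAt.hasLineDerivAt v).tendsto_slope_zero
  have hsmall : ∀ᶠ h : ℂ in 𝓝[≠] 0, h ≠ 0 ∧ ‖h‖ * ‖v‖ < R := by
    have : Tendsto (fun h : ℂ => ‖h‖ * ‖v‖) (𝓝 0) (𝓝 0) :=
      (continuous_norm.mul continuous_const).tendsto' 0 0 (by simp)
    exact eventually_mem_nhdsWithin.and
      ((this.eventually_lt_const hR).filter_mono nhdsWithin_le_nhds)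
  have := le_of_tendsto hlim (hsmall.mono fun h hh => hD h hh.1 hh.2)
  rw [dist_eq_norm, dist_eq_norm] at this
  calc ‖(fderiv ℂ Φ ζ - fderiv ℂ Φ b) v‖ = ‖fderiv ℂ Φ ζ v - fderiv ℂ Φ b v‖ := rfl
    _ ≤ 2 * M * ‖v‖ / R * ‖ζ - b‖ := this
    _ = 2 * M / R * ‖ζ - b‖ * ‖v‖ := by ring

theorem DifferentiableOn.continuousOn_fderiv_of_isOpen {Φ : E → F} {s : Set E}
    (hd : DifferentiableOn ℂ Φ s) (hs : IsOpen s) : ContinuousOn (fderiv ℂ Φ) s := by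
  intro b hb
  obtain ⟨δ₁, hδ₁, hδ₁s⟩ := Metric.isOpen_iff.1 hs b hb
  obtain ⟨δ₂, hδ₂, hδ₂Φ⟩ := Metric.continuousAt_iff.1
    (hd.continuousOn.continuousAt (hs.mem_nhds hb)) 1 one_pos
  set δ := min δ₁ δ₂
  have hδ : 0 < δ := lt_min hδ₁ hδ₂
  have hδs : ball b δ ⊆ s := (ball_subset_ball (min_le_left _ _)).trans hδ₁s
  have hΦb : ∀ y ∈ ball b δ, ‖Φ y - Φ b‖ < 1 := fun y hy => by
    simpa [dist_eq_norm] using hδ₂Φ (lt_of_lt_of_le hy (min_le_right _ _))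
  -- Cauchy's estimate turns the local bound `‖Φ w - Φ b‖ < 1` into a bound on `fderiv`.
  have hbound : ∀ z ∈ ball b (2 * (δ / 4)), ‖fderiv ℂ Φ z‖ ≤ 2 / (δ / 2) := by
    intro z hz
    have hzw : ball z (δ / 2) ⊆ ball b δ := ball_subset_ball' (by linarith [mem_ball.1 hz])
    refine Complex.norm_fderiv_le_div_of_mapsTo_ball (hd.mono (hzw.trans hδs))
      (fun w hw => ?_) (by positivity)
    rw [mem_closedBall, dist_eq_norm]
    linarith [norm_sub_le_norm_sub_add_norm_sub (Φ w) (Φ b) (Φ z), norm_sub_rev (Φ z) (Φ b),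
      hΦb w (hzw hw), hΦb z (hzw (mem_ball_self (by positivity)))]
  refine ContinuousAt.continuousWithinAt <| continuousAt_of_locally_lipschitz
    (by positivity : 0 < δ / 4) (2 * (2 / (δ / 2)) / (δ / 4)) fun ζ hζ => ?_
  rw [dist_eq_norm, dist_eq_norm]
  exact norm_fderiv_sub_fderiv_le_of_norm_fderiv_le
    (hd.mono ((ball_subset_ball (by linarith)).trans hδs)) hbound hζ

theorem closedBall_subset_image_of_norm_fderiv_le_two_mul [CompleteSpace E] [Nontrivial E]
    {Φ : E → F} {a : E} {R C : ℝ} (e : E ≃L[ℂ] F) (hR : 0 < R)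
    (hd : DifferentiableOn ℂ Φ (ball a (2 * R))) (he : fderiv ℂ Φ a = e)
    (hM : ∀ z ∈ ball a (2 * R), ‖fderiv ℂ Φ z‖ ≤ 2 * ‖(e : E →L[ℂ] F)‖)
    (hC : ‖(e : E →L[ℂ] F)‖ * ‖(e.symm : F →L[ℂ] E)‖ ≤ C) :
    closedBall (Φ a) (R * ‖(e : E →L[ℂ] F)‖ / (16 * C ^ 2)) ⊆ Φ '' ball a (2 * R) := by
  set M := ‖(e : E →L[ℂ] F)‖
  have hC₁ : 1 ≤ C := e.one_le_norm_mul_norm_symm.trans hC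
  set r := R / (8 * C) with hr_def
  have hr : r < R := div_lt_self hR (by linarith)
  have hclosed : closedBall a r ⊆ ball a R := closedBall_subset_ball hr
  have hlip : ∀ z ∈ closedBall a r, ‖fderiv ℂ Φ z - e‖ ≤ M / (2 * C) := fun z hz => by
    rw [← he]
    calc ‖fderiv ℂ Φ z - fderiv ℂ Φ a‖ ≤ 2 * (2 * M) / R * ‖z - a‖ :=
          norm_fderiv_sub_fderiv_le_of_norm_fderiv_le hd hM (hclosed hz)
      _ ≤ 2 * (2 * M) / R * r := by gcongr; exact mem_closedBall_iff_norm.1 hz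
      _ = M / (2 * C) := by rw [hr_def]; field_simp; ring
  have himage := closedBall_subset_image_of_norm_fderiv_sub_le e (by positivity)
    (fun z hz => hd.differentiableAt (isOpen_ball.mem_nhds
      (ball_subset_ball (by linarith) (hclosed hz)))) hlip
  have hsymm : M / C ≤ ‖(e.symm : F →L[ℂ] E)‖⁻¹ := by
    rw [le_inv_comm₀ (div_pos e.norm_pos (by positivity)) e.norm_symm_pos, inv_div,
      le_div_iff₀ e.norm_pos]
    linarith
  refine (closedBall_subset_closedBall ?_).trans
    (himage.trans (image_mono (hclosed.trans (ball_subset_ball (by linarith)))))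
  calc R * M / (16 * C ^ 2) = (M / C - M / (2 * C)) * r := by rw [hr_def]; field_simp; ring
    _ ≤ (‖(e.symm : F →L[ℂ] E)‖⁻¹ - M / (2 * C)) * r := by gcongr

end Holomorphic

section Rescaling

variable {X : Type*} [MetricSpace X] [ProperSpace X]

theorem exists_mem_closedBall_forall_ball_le_two_mul {u : X → ℝ} {x₀ : X} {R : ℝ}
    (hR : 0 ≤ R) (hu : ContinuousOn u (closedBall x₀ R)) (hu₀ : 0 ≤ u x₀) :
    ∃ a ∈ closedBall x₀ R, R * u x₀ ≤ (R - dist a x₀) * u a ∧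
      ∀ z ∈ ball a ((R - dist a x₀) / 2), u z ≤ 2 * u a := by
  obtain ⟨a, ha, hmax⟩ := (isCompact_closedBall x₀ R).exists_isMaxOn
    (f := fun z => (R - dist z x₀) * u z) (nonempty_closedBall.2 hR)
    ((continuous_const.sub (continuous_id.dist continuous_const)).continuousOn.mul hu)
  have hx₀ : R * u x₀ ≤ (R - dist a x₀) * u a := by
    simpa using hmax (mem_closedBall_self hR)
  refine ⟨a, ha, hx₀, fun z hz => ?_⟩
  have hza : dist z a < (R - dist a x₀) / 2 := hz
  have hd : 0 < R - dist a x₀ := by linarith [dist_nonneg (x := z) (y := a)]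
  have hua : 0 ≤ u a := nonneg_of_mul_nonneg_right (hx₀.trans' (by positivity)) hd
  have hdz : (R - dist a x₀) / 2 < R - dist z x₀ := by
    linarith [dist_triangle z a x₀]
  have hz : (R - dist z x₀) * u z ≤ (R - dist a x₀) * u a :=
    hmax (mem_closedBall.2 (by linarith [dist_nonneg (x := z) (y := a)]))
  by_contra! h
  nlinarith

end Rescaling

theorem exists_ball_subset_image_of_norm_mul_norm_inverse_le {E : Type*} [NormedAddCommGroup E]
    [NormedSpace ℂ E] [ProperSpace E] [Nontrivial E] {Φ : E → E} {C : ℝ}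
    (hd : DifferentiableOn ℂ Φ (ball 0 1)) (h₀ : fderiv ℂ Φ 0 = ContinuousLinearMap.id ℂ E)
    (hC : ∀ z ∈ ball (0 : E) 1,
      IsUnit (fderiv ℂ Φ z) ∧ ‖fderiv ℂ Φ z‖ * ‖Ring.inverse (fderiv ℂ Φ z)‖ ≤ C) :
    ∃ a, ball a (128 * C ^ 2)⁻¹ ⊆ Φ '' ball 0 1 := by
  have hball : closedBall (0 : E) (1 / 2) ⊆ ball 0 1 := closedBall_subset_ball (by norm_num)
  obtain ⟨a, ha, hmax, hloc⟩ := exists_mem_closedBall_forall_ball_le_two_mul (by norm_num)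
    (((hd.continuousOn_fderiv_of_isOpen isOpen_ball).mono hball).norm) (norm_nonneg _)
  set d := 1 / 2 - dist a 0 with hd_def
  rw [h₀, ContinuousLinearMap.norm_id, mul_one] at hmax
  have hd₀ : 0 < d := by nlinarith [norm_nonneg (fderiv ℂ Φ a), dist_nonneg (x := a) (y := 0)]
  obtain ⟨⟨U, hU⟩, hCa⟩ := hC a (hball ha)
  set e := ContinuousLinearEquiv.ofUnit U
  have he : fderiv ℂ Φ a = e := hU.symm
  have he_symm : Ring.inverse (fderiv ℂ Φ a) = e.symm := by rw [← hU, Ring.inverse_unit]; rfl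
  rw [he_symm, he] at hCa
  rw [he, show d / 2 = 2 * (d / 4) by ring] at hloc
  have hsub : ball a (2 * (d / 4)) ⊆ ball 0 1 := ball_subset_ball' (by linarith)
  refine ⟨Φ a, ball_subset_closedBall.trans ((closedBall_subset_closedBall ?_).trans
    ((closedBall_subset_image_of_norm_fderiv_le_two_mul e (by positivity) (hd.mono hsub) he hloc
      hCa).trans (image_mono hsub)))⟩
  calc (128 * C ^ 2)⁻¹ = 1 / 2 * (64 * C ^ 2)⁻¹ := by ring
    _ ≤ d * ‖(e : E →L[ℂ] E)‖ * (64 * C ^ 2)⁻¹ := by gcongr; rwa [← he]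
    _ = d / 4 * ‖(e : E →L[ℂ] E)‖ / (16 * C ^ 2) := by ring

/-- **Landau's theorem** (Theorem 3.1). For every `k ≥ 1` and `C > 0` there is a universal
`ρ > 0` such that every holomorphic map `Φ : 𝔹ᵏ → ℂᵏ` with `Φ(0) = 0`, `Φ'(0) = Id` and
`‖Φ'(z)‖ ⬝ ‖Φ'(z)⁻¹‖ ≤ C` on `𝔹ᵏ` has an open ball of radius `ρ` in its image. -/
theorem landau (k : ℕ) (hk : 1 ≤ k) (C : ℝ) (hC : 0 < C) :
    ∃ ρ > (0 : ℝ), ∀ Φ : EuclideanSpace ℂ (Fin k) → EuclideanSpace ℂ (Fin k),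
      DifferentiableOn ℂ Φ (ball (0 : EuclideanSpace ℂ (Fin k)) 1) →
      Φ 0 = 0 →
      fderiv ℂ Φ 0 = ContinuousLinearMap.id ℂ (EuclideanSpace ℂ (Fin k)) →
      (∀ z ∈ ball (0 : EuclideanSpace ℂ (Fin k)) 1,
        IsUnit (fderiv ℂ Φ z) ∧ ‖fderiv ℂ Φ z‖ * ‖Ring.inverse (fderiv ℂ Φ z)‖ ≤ C) →
      ∃ a : EuclideanSpace ℂ (Fin k),
        ball a ρ ⊆ Φ '' (ball (0 : EuclideanSpace ℂ (Fin k)) 1) := by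
  have : Nonempty (Fin k) := ⟨⟨0, hk⟩⟩
  exact ⟨(128 * C ^ 2)⁻¹, by positivity, fun Φ hd _ h₀ hΦ =>
    exists_ball_subset_image_of_norm_mul_norm_inverse_le hd h₀ hΦ⟩
end

section
/- Let k ≥ 1 and let f : ℂ^k → ℂ^k be an entire (everywhere holomorphic) map with f'(0) = Id such that for some constant C > 0 and every z ∈ ℂ^k the derivative f'(z) is invertible and ‖f'(z)‖ · ‖f'(z)⁻¹‖ ≤ C. Then f(ℂ^k) contains open balls of arbitrarily large radius: for every R > 0 there is a point a ∈ ℂ^k with B(a, R) ⊆ f(ℂ^k). -/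
/-!
Let `w z = ‖f'(z)⁻¹‖⁻¹`, so that `‖f' z‖ ≤ C w z` and `w 0 = 1`. For `ρ = 64 C R`, maximizing
`(ρ - ‖z‖) w z` over `closedBall 0 ρ` gives a point `z₀` and a radius `t` with `ρ ≤ 2 t w z₀`
and `w ≤ 2 w z₀` on `closedBall z₀ t`. There `‖f'‖ ≤ 2 C w z₀`, so by the Schwarz lemma `f'`
stays within `w z₀ / 2` of `f' z₀` on a ball of radius `t / 16C` about `z₀`, and the quantitative
inverse function theorem puts the ball of radius `t w z₀ / 32C ≥ R` about `f z₀` in the image.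
-/

open Metric Set

namespace Complex

variable {E F : Type*} [NormedAddCommGroup E] [NormedSpace ℂ E]
  [NormedAddCommGroup F] [NormedSpace ℂ F] {f : E → F} {z z₀ : E} {t M : ℝ}

/-- The increment `x ↦ f (x + e) - f x` has derivative `f' (z₀ + e) - f' z₀` at `z₀`, and the
mean value theorem makes it small on `ball z₀ (t / 2)`; the Schwarz lemma then bounds that
derivative. -/
theorem norm_fderiv_sub_fderiv_le (hf : DifferentiableOn ℂ f (ball z₀ t))
    (hM : ∀ x ∈ ball z₀ t, ‖fderiv ℂ f x‖ ≤ M) (hz : z ∈ ball z₀ (t / 2)) :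
    ‖fderiv ℂ f z - fderiv ℂ f z₀‖ ≤ 4 * M * ‖z - z₀‖ / t := by
  set e := z - z₀
  have he : ‖e‖ < t / 2 := mem_ball_iff_norm.1 hz
  have ht : 0 < t := by linarith [norm_nonneg e]
  have hdiff : ∀ x ∈ ball z₀ t, DifferentiableAt ℂ f x := fun x hx =>
    hf.differentiableAt (isOpen_ball.mem_nhds hx)
  have hmem : ∀ x ∈ ball z₀ (t / 2), x ∈ ball z₀ t ∧ x + e ∈ ball z₀ t := by
    intro x hx
    simp only [mem_ball_iff_norm] at hx ⊢
    refine ⟨by linarith, ?_⟩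
    calc ‖x + e - z₀‖ ≤ ‖x - z₀‖ + ‖e‖ := by rw [add_sub_right_comm]; exact norm_add_le _ _
      _ < t := by linarith
  set g : E → F := fun x => f (x + e) - f x
  have hg_diff : ∀ x ∈ ball z₀ (t / 2), HasFDerivAt g (fderiv ℂ f (x + e) - fderiv ℂ f x) x :=
    fun x hx => (((hdiff _ (hmem x hx).2).hasFDerivAt.comp x
      ((hasFDerivAt_id x).add_const e)).sub (hdiff x (hmem x hx).1).hasFDerivAt)
  have hg_small : ∀ x ∈ ball z₀ (t / 2), ‖g x‖ ≤ M * ‖e‖ := fun x hx => by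
    simpa using (convex_ball z₀ t).norm_image_sub_le_of_norm_fderiv_le hdiff hM
      (hmem x hx).1 (hmem x hx).2
  have hg_maps : MapsTo g (ball z₀ (t / 2)) (closedBall (g z₀) (2 * (M * ‖e‖))) := fun x hx => by
    rw [mem_closedBall_iff_norm, two_mul]
    exact (norm_sub_le _ _).trans
      (add_le_add (hg_small x hx) (hg_small z₀ (mem_ball_self (by positivity))))
  have key := norm_fderiv_le_div_of_mapsTo_ball
    (fun x hx => (hg_diff x hx).differentiableAt.differentiableWithinAt) hg_maps (half_pos ht)
  rw [(hg_diff z₀ (mem_ball_self (half_pos ht))).fderiv, add_sub_cancel] at key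
  calc _ ≤ 2 * (M * ‖e‖) / (t / 2) := key
    _ = 4 * M * ‖e‖ / t := by field_simp; ring

theorem exists_ball_norm_fderiv_le (hf : Differentiable ℂ f) (a : E) :
    ∃ δ > 0, ∃ M, ∀ z ∈ ball a δ, ‖fderiv ℂ f z‖ ≤ M := by
  obtain ⟨δ, hδ, hclose⟩ := Metric.continuousAt_iff.1 (hf a).continuousAt 1 one_pos
  refine ⟨δ / 2, half_pos hδ, 2 / (δ / 2), fun z hz => ?_⟩
  refine norm_fderiv_le_div_of_mapsTo_ball hf.differentiableOn (fun w hw => ?_) (half_pos hδ)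
  rw [mem_ball] at hz hw
  have hwa : dist w a < δ := (dist_triangle w z a).trans_lt (by linarith)
  have hza : dist z a < δ := by linarith
  rw [mem_closedBall]
  linarith [dist_triangle_right (f w) (f z) (f a), hclose hwa, hclose hza]

theorem continuous_fderiv (hf : Differentiable ℂ f) : Continuous (fderiv ℂ f) :=
  continuous_iff_continuousAt.2 fun a => by
    obtain ⟨δ, hδ, M, hM⟩ := exists_ball_norm_fderiv_le hf a
    refine continuousAt_of_locally_lipschitz (half_pos hδ) (4 * M / δ) fun z hz => ?_
    simpa [dist_eq_norm, mul_div_right_comm] using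
      norm_fderiv_sub_fderiv_le hf.differentiableOn hM hz

end Complex

/-- At a maximizer `z₀` of `(ρ - dist z x₀) * w z` on `closedBall x₀ ρ`, with `t` half the
distance from `z₀` to the boundary, every point of `closedBall z₀ t` is at distance at least `t`
from the boundary, so its weight is at most twice that of `z₀`. -/
theorem exists_forall_closedBall_le_two_mul {X : Type*} [MetricSpace X] [ProperSpace X]
    {w : X → ℝ} (hw : Continuous w) (hw0 : ∀ x, 0 ≤ w x) {x₀ : X} {ρ : ℝ} (hρ : 0 < ρ)
    (hx₀ : 0 < w x₀) :
    ∃ z₀ t, 0 < t ∧ ρ * w x₀ ≤ 2 * t * w z₀ ∧ ∀ z ∈ closedBall z₀ t, w z ≤ 2 * w z₀ := by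
  obtain ⟨z₀, hz₀, hmax⟩ := (isCompact_closedBall x₀ ρ).exists_isMaxOn
    ⟨x₀, mem_closedBall_self hρ.le⟩
    ((continuous_const.sub (continuous_id.dist continuous_const)).mul hw).continuousOn
  have hmax' : ∀ z ∈ closedBall x₀ ρ, (ρ - dist z x₀) * w z ≤ (ρ - dist z₀ x₀) * w z₀ :=
    isMaxOn_iff.1 hmax
  obtain ⟨t, h2t⟩ : ∃ t, ρ - dist z₀ x₀ = 2 * t := ⟨(ρ - dist z₀ x₀) / 2, by ring⟩
  rw [h2t] at hmax'
  have hρt : ρ * w x₀ ≤ 2 * t * w z₀ := by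
    simpa using hmax' x₀ (mem_closedBall_self hρ.le)
  have ht : 0 < t := by
    by_contra! ht
    nlinarith [hw0 z₀]
  refine ⟨z₀, t, ht, hρt, fun z hz => ?_⟩
  have hdist : t ≤ ρ - dist z x₀ := by
    linarith [dist_triangle z z₀ x₀, mem_closedBall.1 hz]
  have hz' : z ∈ closedBall x₀ ρ := mem_closedBall.2 (by linarith)
  have : t * w z ≤ t * (2 * w z₀) := by
    linarith [hmax' z hz', mul_le_mul_of_nonneg_right hdist (hw0 z)]
  exact le_of_mul_le_mul_left this ht

theorem closedBall_subset_range_of_norm_fderiv_sub_le {𝕜 E F : Type*} [RCLike 𝕜]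
    [NormedAddCommGroup E] [NormedSpace ℝ E] [NormedSpace 𝕜 E] [CompleteSpace E]
    [NormedAddCommGroup F] [NormedSpace 𝕜 F] {f : E → F} {A : E ≃L[𝕜] F} {z₀ : E} {ε c : ℝ}
    (hε : 0 ≤ ε) (hf : ∀ x ∈ closedBall z₀ ε, DifferentiableAt 𝕜 f x)
    (hc : ∀ x ∈ closedBall z₀ ε, ‖fderiv 𝕜 f x - A‖ ≤ c) :
    closedBall (f z₀) ((‖(A.symm : F →L[𝕜] E)‖⁻¹ - c) * ε) ⊆ range f := by
  have hc0 : 0 ≤ c := (norm_nonneg _).trans (hc z₀ (mem_closedBall_self hε))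
  have happrox : ApproximatesLinearOn f (A : E →L[𝕜] F) (closedBall z₀ ε) ⟨c, hc0⟩ :=
    fun x hx y hy => (convex_closedBall z₀ ε).norm_image_sub_le_of_norm_fderiv_le' hf hc hy hx
  intro y hy
  obtain ⟨x, -, rfl⟩ := happrox.surjOn_closedBall_of_nonlinearRightInverse
    A.toNonlinearRightInverse hε subset_rfl hy
  exact mem_range_self x

theorem IsUnit.exists_continuousLinearEquiv {R M : Type*} [Semiring R] [TopologicalSpace M]
    [AddCommMonoid M] [Module R M] {T : M →L[R] M} (hT : IsUnit T) :
    ∃ A : M ≃L[R] M, (A : M →L[R] M) = T ∧ (A.symm : M →L[R] M) = Ring.inverse T :=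
  ⟨ContinuousLinearEquiv.unitsEquiv R M hT.unit, hT.unit_spec, by
    have h := Ring.inverse_unit hT.unit
    rw [hT.unit_spec] at h
    rw [h]
    rfl⟩

/-- **Corollary to Landau's theorem.** An entire map `f : ℂᵏ → ℂᵏ` with `f'(0) = Id` and
uniformly bounded distortion `‖f'(z)‖ ⬝ ‖f'(z)⁻¹‖ ≤ C` has balls of arbitrarily large
radius in its image. -/
theorem landau_corollary (k : ℕ) (hk : 1 ≤ k)
    (f : EuclideanSpace ℂ (Fin k) → EuclideanSpace ℂ (Fin k))
    (hf : Differentiable ℂ f)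
    (hf0 : fderiv ℂ f 0 = ContinuousLinearMap.id ℂ (EuclideanSpace ℂ (Fin k)))
    (C : ℝ) (hC : 0 < C)
    (hdist : ∀ z : EuclideanSpace ℂ (Fin k),
      IsUnit (fderiv ℂ f z) ∧ ‖fderiv ℂ f z‖ * ‖Ring.inverse (fderiv ℂ f z)‖ ≤ C) :
    ∀ R > (0 : ℝ), ∃ a : EuclideanSpace ℂ (Fin k), ball a R ⊆ Set.range f := by
  intro R hR
  have : Nonempty (Fin k) := ⟨⟨0, hk⟩⟩
  set w : EuclideanSpace ℂ (Fin k) → ℝ := fun z => ‖Ring.inverse (fderiv ℂ f z)‖⁻¹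
  have hinv_pos : ∀ z, 0 < ‖Ring.inverse (fderiv ℂ f z)‖ := fun z =>
    norm_pos_iff.2 (hdist z).1.ringInverse.ne_zero
  have hw_pos : ∀ z, 0 < w z := fun z => inv_pos.2 (hinv_pos z)
  have hfderiv_le : ∀ z, ‖fderiv ℂ f z‖ ≤ C * w z := fun z => by
    rw [← div_eq_mul_inv, le_div_iff₀ (hinv_pos z)]
    exact (hdist z).2
  have hw0 : w 0 = 1 := by simp [w, hf0, ← ContinuousLinearMap.one_def]
  have hC1 : 1 ≤ C := by simpa [hf0, ← ContinuousLinearMap.one_def] using (hdist 0).2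
  have hw_cont : Continuous w := continuous_iff_continuousAt.2 fun z =>
    ((NormedRing.inverse_continuousAt (hdist z).1.unit).comp_of_eq
      (Complex.continuous_fderiv hf).continuousAt (hdist z).1.unit_spec.symm).norm.inv₀
      (hinv_pos z).ne'
  obtain ⟨z₀, t, ht, hρt, hw_le⟩ := exists_forall_closedBall_le_two_mul hw_cont
    (fun z => (hw_pos z).le) (x₀ := 0) (ρ := 64 * C * R) (by positivity) (hw_pos 0)
  rw [hw0, mul_one] at hρt
  obtain ⟨A, hA, hA_symm⟩ := (hdist z₀).1.exists_continuousLinearEquiv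
  set ε := t / (16 * C) with hε_def
  have hε : ε < t / 2 := div_lt_div_of_pos_left ht (by norm_num) (by linarith)
  have hclose : ∀ x ∈ closedBall z₀ ε, ‖fderiv ℂ f x - A‖ ≤ w z₀ / 2 := by
    intro x hx
    rw [hA]
    calc _ ≤ 4 * (2 * C * w z₀) * ‖x - z₀‖ / t :=
          Complex.norm_fderiv_sub_fderiv_le hf.differentiableOn
            (fun z hz => (hfderiv_le z).trans (by nlinarith [hw_le z (ball_subset_closedBall hz)]))
            (closedBall_subset_ball hε hx)
      _ ≤ 4 * (2 * C * w z₀) * ε / t := by gcongr; exact mem_closedBall_iff_norm.1 hx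
      _ = w z₀ / 2 := by rw [hε_def]; field_simp; ring
  have hsurj :=
    closedBall_subset_range_of_norm_fderiv_sub_le (by positivity) (fun x _ => hf x) hclose
  refine ⟨f z₀, ball_subset_closedBall.trans ((closedBall_subset_closedBall ?_).trans hsurj)⟩
  rw [hA_symm]
  change R ≤ (w z₀ - w z₀ / 2) * ε
  rw [show (w z₀ - w z₀ / 2) * ε = 2 * t * w z₀ / (64 * C) by rw [hε_def]; field_simp; ring,
    le_div_iff₀ (by positivity)]
  linarith
end

section
/- Let Φ : B^k → ℂ^k be holomorphic, let C > 0, and suppose that for every z ∈ B^k the derivative Φ'(z) is invertible with ‖Φ'(z)‖ · ‖Φ'(z)⁻¹‖ ≤ C. Let λ := sup_{‖z‖<1} (1 − ‖z‖) ‖Φ'(z)‖ be finite and attained at a point a ∈ B^k, i.e. (1 − ‖a‖) ‖Φ'(a)‖ = λ, and set B := Φ'(a)⁻¹ and Ψ(z) := Φ(a + B z). Then for every z with ‖z‖ ≤ λ/(2C), the point a + B z lies in B^k and ‖Ψ'(z)‖ = ‖Φ'(a + B z) ∘ B‖ ≤ 2C. -/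
open Metric

/-- **Key derivative bound in the proof of the Brody–Zalcman theorem.** With
`lam = sup_{‖z‖<1} (1-‖z‖)‖Φ'(z)‖` attained at `a`, `B = Φ'(a)⁻¹` and
`Ψ(z) = Φ(a + B z)`, for `‖z‖ ≤ lam/(2C)` the point `a + B z` lies in `𝔹ᵏ` and
`‖Ψ'(z)‖ = ‖Φ'(a + B z) ∘ B‖ ≤ 2C`. -/
theorem reparametrized_derivative_bound (k : ℕ)
    (Φ : EuclideanSpace ℂ (Fin k) → EuclideanSpace ℂ (Fin k))
    (hΦ : DifferentiableOn ℂ Φ (ball (0 : EuclideanSpace ℂ (Fin k)) 1))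
    (C : ℝ) (hC : 0 < C)
    (hdist : ∀ z ∈ ball (0 : EuclideanSpace ℂ (Fin k)) 1,
      IsUnit (fderiv ℂ Φ z) ∧ ‖fderiv ℂ Φ z‖ * ‖Ring.inverse (fderiv ℂ Φ z)‖ ≤ C)
    (lam : ℝ)
    (hsup : ∀ z ∈ ball (0 : EuclideanSpace ℂ (Fin k)) 1,
      (1 - ‖z‖) * ‖fderiv ℂ Φ z‖ ≤ lam)
    (a : EuclideanSpace ℂ (Fin k)) (ha : a ∈ ball (0 : EuclideanSpace ℂ (Fin k)) 1)
    (hattain : (1 - ‖a‖) * ‖fderiv ℂ Φ a‖ = lam)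
    (B : EuclideanSpace ℂ (Fin k) →L[ℂ] EuclideanSpace ℂ (Fin k))
    (hB : B = Ring.inverse (fderiv ℂ Φ a)) :
    ∀ z : EuclideanSpace ℂ (Fin k), ‖z‖ ≤ lam / (2 * C) →
      a + B z ∈ ball (0 : EuclideanSpace ℂ (Fin k)) 1 ∧
      fderiv ℂ (fun w => Φ (a + B w)) z = (fderiv ℂ Φ (a + B z)).comp B ∧
      ‖(fderiv ℂ Φ (a + B z)).comp B‖ ≤ 2 * C := by
  intro z hz
  have ha' : ‖a‖ < 1 := mem_ball_zero_iff.mp ha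
  have h1a : 0 < 1 - ‖a‖ := by linarith
  have hAB : ‖fderiv ℂ Φ a‖ * ‖B‖ ≤ C := by rw [hB]; exact (hdist a ha).2
  have hA0 : 0 ≤ ‖fderiv ℂ Φ a‖ := norm_nonneg _
  have hB0 : 0 ≤ ‖B‖ := norm_nonneg _
  have hz0 : 0 ≤ ‖z‖ := norm_nonneg _
  -- ‖B z‖ ≤ (1 - ‖a‖)/2
  have hBz : ‖B z‖ ≤ (1 - ‖a‖) / 2 := by
    have h1 : ‖B z‖ ≤ ‖B‖ * ‖z‖ := B.le_opNorm z
    have h2 : ‖B‖ * ‖z‖ ≤ ‖B‖ * (lam / (2 * C)) := by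
      exact mul_le_mul_of_nonneg_left hz hB0
    have h3 : ‖B‖ * lam ≤ C * (1 - ‖a‖) := by
      rw [← hattain]; nlinarith
    have h4 : ‖B‖ * (lam / (2 * C)) ≤ (1 - ‖a‖) / 2 := by
      rw [mul_div_assoc', div_le_div_iff₀ (by positivity) (by norm_num : (0:ℝ) < 2)]
      nlinarith
    linarith
  have hnorm : ‖a + B z‖ ≤ ‖a‖ + (1 - ‖a‖) / 2 :=
    le_trans (norm_add_le _ _) (by linarith)
  have hw : a + B z ∈ ball (0 : EuclideanSpace ℂ (Fin k)) 1 := by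
    rw [mem_ball_zero_iff]; linarith
  have hd : DifferentiableAt ℂ Φ (a + B z) :=
    hΦ.differentiableAt (isOpen_ball.mem_nhds hw)
  have haff : HasFDerivAt (fun w => a + B w) B z := (B.hasFDerivAt).const_add a
  have hcomp : HasFDerivAt (fun w => Φ (a + B w))
      ((fderiv ℂ Φ (a + B z)).comp B) z := (hd.hasFDerivAt).comp z haff
  refine ⟨hw, hcomp.fderiv, ?_⟩
  have hsw := hsup (a + B z) hw
  have hW0 : 0 ≤ ‖fderiv ℂ Φ (a + B z)‖ := norm_nonneg _
  -- ‖Φ'(w)‖ ≤ 2 ‖Φ'(a)‖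
  have hWle : ‖fderiv ℂ Φ (a + B z)‖ ≤ 2 * ‖fderiv ℂ Φ a‖ := by
    have h5 : ((1 - ‖a‖) / 2) * ‖fderiv ℂ Φ (a + B z)‖ ≤
        (1 - ‖a + B z‖) * ‖fderiv ℂ Φ (a + B z)‖ := by
      apply mul_le_mul_of_nonneg_right _ hW0
      linarith
    have h6 : ((1 - ‖a‖) / 2) * ‖fderiv ℂ Φ (a + B z)‖ ≤ (1 - ‖a‖) * ‖fderiv ℂ Φ a‖ := by
      rw [hattain]; linarith
    nlinarith
  calc ‖(fderiv ℂ Φ (a + B z)).comp B‖ ≤ ‖fderiv ℂ Φ (a + B z)‖ * ‖B‖ :=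
        ContinuousLinearMap.opNorm_comp_le _ _
    _ ≤ 2 * C := by nlinarith
end

section
/- Let δ > 0 and let n > 0 be a real number with n δ² > 2. Define g : ℂ² → ℂ² by g(z, w) = (z + n w², w). Then the image g(Δ²) of the open unit polydisc contains no open Euclidean ball of radius δ: for every (α₀, β₀) ∈ ℂ² there exists ζ ∈ ℂ with |ζ| < δ such that (α₀, β₀ + ζ) ∉ g(Δ²). -/
/-!
If `(α, w)` and `(α, w')` both lie in `g(Δ²)`, then `α - n w²` and `α - n w'²` lie in the unit
disc, so `n ‖w'² - w²‖ < 2`. Given `(α₀, β₀)` in the image, moving `β₀` by `ζ = ±r` with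
`r < δ` and `n r² > 2` makes `‖(β₀ + ζ)² - β₀²‖ = r ‖2β₀ + ζ‖ ≥ r²` for the right sign, so
`(α₀, β₀ + ζ)` is missed; if `(α₀, β₀)` is itself missed, take `ζ = 0`.
-/

open Filter Topology

theorem RCLike.exists_norm_eq_and_sq_le_norm_add_sq_sub_sq {𝕜 : Type*} [RCLike 𝕜] (c β : 𝕜) :
    ∃ ζ : 𝕜, ‖ζ‖ = ‖c‖ ∧ ‖c‖ ^ 2 ≤ ‖(β + ζ) ^ 2 - β ^ 2‖ := by
  have factor : ∀ ζ : 𝕜, (β + ζ) ^ 2 - β ^ 2 = ζ * (2 * β + ζ) := fun ζ => by ring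
  have two_mul_le : 2 * ‖c‖ ≤ ‖2 * β + c‖ + ‖2 * β + -c‖ :=
    calc 2 * ‖c‖ = ‖(2 * β + c) - (2 * β + -c)‖ := by
          rw [show (2 * β + c) - (2 * β + -c) = 2 * c by ring, norm_mul, RCLike.norm_two]
      _ ≤ ‖2 * β + c‖ + ‖2 * β + -c‖ := norm_sub_le _ _
  rcases le_or_gt ‖c‖ ‖2 * β + c‖ with hc | hc
  · exact ⟨c, rfl, by rw [factor, norm_mul, sq]; gcongr⟩
  · refine ⟨-c, norm_neg c, ?_⟩
    rw [factor, norm_mul, norm_neg, sq]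
    gcongr
    linarith

theorem mem_image_polydisc_shear_iff {R : Type*} [SeminormedRing R] (c α β : R) :
    (α, β) ∈ (fun p : R × R => (p.1 + c * p.2 ^ 2, p.2)) '' {p : R × R | ‖p.1‖ < 1 ∧ ‖p.2‖ < 1} ↔
      ‖α - c * β ^ 2‖ < 1 ∧ ‖β‖ < 1 := by
  constructor
  · rintro ⟨⟨z, w⟩, ⟨hz, hw⟩, heq⟩
    obtain ⟨rfl, rfl⟩ := Prod.mk.inj heq
    simpa using ⟨hz, hw⟩
  · rintro ⟨hα, hβ⟩
    exact ⟨(α - c * β ^ 2, β), ⟨hα, hβ⟩, by simp⟩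

theorem harris_counterexample_general (δ n : ℝ) (hδ : 0 < δ) (h : 2 < n * δ ^ 2) :
    ∀ α₀ β₀ : ℂ, ∃ ζ : ℂ, ‖ζ‖ < δ ∧
      (α₀, β₀ + ζ) ∉
        (fun p : ℂ × ℂ => (p.1 + (n : ℂ) * p.2 ^ 2, p.2)) ''
          {p : ℂ × ℂ | ‖p.1‖ < 1 ∧ ‖p.2‖ < 1} := by
  intro α₀ β₀
  have near_δ : ∀ᶠ r in 𝓝[<] δ, 2 < n * r ^ 2 :=
    nhdsWithin_le_nhds ((by fun_prop : Continuous fun r : ℝ => n * r ^ 2).continuousAt.eventually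
      (lt_mem_nhds h))
  obtain ⟨r, hnr, hr₀, hrδ⟩ := (near_δ.and (Ioo_mem_nhdsLT hδ)).exists
  obtain ⟨ζ, hζ, hsq⟩ := RCLike.exists_norm_eq_and_sq_le_norm_add_sq_sub_sq (r : ℂ) β₀
  rw [Complex.norm_real, Real.norm_of_nonneg hr₀.le] at hζ hsq
  by_cases hβ₀ : (α₀, β₀) ∈
      (fun p : ℂ × ℂ => (p.1 + (n : ℂ) * p.2 ^ 2, p.2)) '' {p : ℂ × ℂ | ‖p.1‖ < 1 ∧ ‖p.2‖ < 1}
  · refine ⟨ζ, hζ ▸ hrδ, fun hζ' => ?_⟩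
    rw [mem_image_polydisc_shear_iff] at hβ₀ hζ'
    have fibre : ‖(n : ℂ) * ((β₀ + ζ) ^ 2 - β₀ ^ 2)‖ < 2 :=
      calc ‖(n : ℂ) * ((β₀ + ζ) ^ 2 - β₀ ^ 2)‖
          = ‖(α₀ - n * β₀ ^ 2) - (α₀ - n * (β₀ + ζ) ^ 2)‖ := by ring_nf
        _ < 2 := (norm_sub_le _ _).trans_lt (by linarith [hβ₀.1, hζ'.1])
    have hn : 0 < n := pos_of_mul_pos_left (by linarith) (sq_nonneg r)
    rw [norm_mul, Complex.norm_real, Real.norm_of_nonneg hn.le] at fibre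
    nlinarith [mul_le_mul_of_nonneg_left hsq hn.le]
  · exact ⟨0, by simpa using hδ, by simpa using hβ₀⟩

/-- **Harris' counterexample to Landau in ℂ².** If `n δ² > 2` then the image of the open
unit polydisc under `g(z,w) = (z + n w², w)` contains no open Euclidean ball of radius
`δ`: for every `(α₀, β₀)` some point `(α₀, β₀ + ζ)` with `|ζ| < δ` is missed. -/
theorem harris_counterexample (δ n : ℝ) (hδ : 0 < δ) (hn : 0 < n) (h : 2 < n * δ ^ 2) :
    ∀ α₀ β₀ : ℂ, ∃ ζ : ℂ, ‖ζ‖ < δ ∧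
      (α₀, β₀ + ζ) ∉
        (fun p : ℂ × ℂ => (p.1 + (n : ℂ) * p.2 ^ 2, p.2)) ''
          {p : ℂ × ℂ | ‖p.1‖ < 1 ∧ ‖p.2‖ < 1} :=
  harris_counterexample_general δ n hδ h
end

section
/- Let δ > 0 and u, v ∈ ℂ. It is impossible that the inequality |(δ² v − u²) − 2 u δ e^{iθ} − δ² e^{2iθ}| < δ² holds for all θ ∈ [−π, π]. -/
/-!
Averaging `p(z) z⁻²` over the fourth roots of unity `1, -1, i, -i` extracts the top coefficient
of a quadratic `p(z) = a + b z + c z²`, so `4‖c‖ ≤ ∑ ‖p(z)‖` and `‖p‖` cannot stay below `‖c‖`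
on the unit circle. For the given polynomial `c = -δ²`.
-/

open Real Complex

theorem norm_lt_of_forall_pow_four_eq_one (a b c : ℂ) (M : ℝ)
    (h : ∀ z : ℂ, z ^ 4 = 1 → ‖a + b * z + c * z ^ 2‖ < M) : ‖c‖ < M := by
  set p : ℂ → ℂ := fun z ↦ a + b * z + c * z ^ 2
  have hI4 : I ^ 4 = 1 := by rw [show (4 : ℕ) = 2 * 2 from rfl, pow_mul, I_sq]; norm_num
  have h₁ := h 1 (one_pow 4)
  have h₂ := h (-1) (by norm_num)
  have h₃ := h I hI4
  have h₄ := h (-I) (by rw [neg_pow, hI4]; norm_num)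
  have hsum : p 1 + p (-1) - p I - p (-I) = 4 * c := by
    simp only [p]; ring_nf; rw [I_sq]; ring
  have htri : ‖p 1 + p (-1) - p I - p (-I)‖ ≤ ‖p 1‖ + ‖p (-1)‖ + ‖p I‖ + ‖p (-I)‖ := by
    grw [norm_sub_le, norm_sub_le, norm_add_le]
  rw [hsum, norm_mul, RCLike.norm_ofNat] at htri
  simp only [p] at htri
  linarith

theorem exists_norm_le_norm_quadratic_exp_mul_I (a b c : ℂ) :
    ∃ θ ∈ Set.Icc (-π) π,
      ‖c‖ ≤ ‖a + b * exp (θ * I) + c * exp (θ * I) ^ 2‖ := by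
  by_contra! h
  refine lt_irrefl ‖c‖ (norm_lt_of_forall_pow_four_eq_one a b c ‖c‖ fun z hz ↦ ?_)
  have hz_exp : exp (arg z * I) = z := by
    simpa [norm_eq_one_of_pow_eq_one hz four_ne_zero] using norm_mul_exp_arg_mul_I z
  simpa [hz_exp] using h (arg z) ⟨(neg_pi_lt_arg z).le, arg_le_pi z⟩

theorem duren_rudin_parseval_general (δ : ℝ) (u v : ℂ) :
    ¬ ∀ θ ∈ Set.Icc (-π) π,
      ‖((δ : ℂ) ^ 2 * v - u ^ 2) - 2 * u * (δ : ℂ) * Complex.exp (θ * Complex.I)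
        - (δ : ℂ) ^ 2 * Complex.exp (2 * θ * Complex.I)‖ < δ ^ 2 := by
  intro h
  obtain ⟨θ, hθ, hle⟩ :=
    exists_norm_le_norm_quadratic_exp_mul_I ((δ : ℂ) ^ 2 * v - u ^ 2) (-2 * u * δ) (-δ ^ 2)
  have hexp : exp (2 * θ * I) = exp (θ * I) ^ 2 := by rw [← Complex.exp_nat_mul]; ring_nf
  refine (h θ hθ).not_ge ?_
  calc δ ^ 2 = ‖-(δ : ℂ) ^ 2‖ := by simp
    _ ≤ _ := hle
    _ = _ := by rw [hexp]; ring_nf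

/-- **Parseval step in the Duren–Rudin counterexample.** For `δ > 0` and `u, v ∈ ℂ`,
the inequality `|(δ²v - u²) - 2uδ e^{iθ} - δ² e^{2iθ}| < δ²` cannot hold for all
`θ ∈ [-π, π]`. -/
theorem duren_rudin_parseval (δ : ℝ) (hδ : 0 < δ) (u v : ℂ) :
    ¬ ∀ θ ∈ Set.Icc (-π) π,
      ‖((δ : ℂ) ^ 2 * v - u ^ 2) - 2 * u * (δ : ℂ) * Complex.exp (θ * Complex.I)
        - (δ : ℂ) ^ 2 * Complex.exp (2 * θ * Complex.I)‖ < δ ^ 2 :=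
  duren_rudin_parseval_general δ u v
end

section
/- Let δ > 0 and define f : ℂ² → ℂ² by f(z, w) = (z, w + (z/δ)²). Then for every (u, v) ∈ ℂ² the circle C = {(u + δ e^{iθ}, v) : θ ∈ [−π, π]} is not contained in f(Δ²). Consequently, f(Δ²) contains no closed Euclidean ball of radius δ. -/
/-!
A point `(z, w)` lies in `f(Δ²)` only if `‖w - (z/δ)²‖ < 1`. On the circle, `z/δ = a + c` with
`a = u/δ` and `c = e^{iθ}`; taking `c = 1, -1, i, -i` the second differences of `c ↦ (a + c)²`
cancel the `a`-dependence: `(a+1)² + (a-1)² - (a+i)² - (a-i)² = 4`. So the four numbers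
`v - (a + c)²` cannot all have norm `< 1`. A closed ball of radius `δ` contains such a circle.
-/

open Real Complex

noncomputable def shearMap (δ : ℂ) (x : ℂ × ℂ) : ℂ × ℂ := (x.1, x.2 + (x.1 / δ) ^ 2)

def unitPolydisc : Set (ℂ × ℂ) := {x | ‖x.1‖ < 1 ∧ ‖x.2‖ < 1}

lemma norm_sub_div_sq_lt_one_of_mem_image {δ z w : ℂ}
    (h : (z, w) ∈ shearMap δ '' unitPolydisc) : ‖w - (z / δ) ^ 2‖ < 1 := by
  obtain ⟨x, ⟨-, hx₂⟩, hx⟩ := h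
  obtain ⟨rfl, rfl⟩ := Prod.mk.inj hx
  simpa using hx₂

lemma not_forall_norm_sub_add_sq_lt_one (a v : ℂ) :
    ¬ ∀ c ∈ ({1, -1, I, -I} : Set ℂ), ‖v - (a + c) ^ 2‖ < 1 := by
  intro h
  have h₁ := h 1 (by simp)
  have h₂ := h (-1) (by simp)
  have h₃ := h I (by simp)
  have h₄ := h (-I) (by simp)
  have hsum : (v - (a + 1) ^ 2) + (v - (a + -1) ^ 2) - (v - (a + I) ^ 2) - (v - (a + -I) ^ 2)
      = -4 := by
    linear_combination (2 : ℂ) * I_sq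
  have key : (4 : ℝ) ≤
      ‖v - (a + 1) ^ 2‖ + ‖v - (a + -1) ^ 2‖ + ‖v - (a + I) ^ 2‖ + ‖v - (a + -I) ^ 2‖ := by
    calc (4 : ℝ)
        = ‖(v - (a + 1) ^ 2) + (v - (a + -1) ^ 2) - (v - (a + I) ^ 2) - (v - (a + -I) ^ 2)‖ := by
          rw [hsum]; norm_num
      _ ≤ _ := by
          refine (norm_sub_le _ _).trans (add_le_add_left ((norm_sub_le _ _).trans ?_) _)
          exact add_le_add_left (norm_add_le _ _) _
  linarith

lemma exists_mem_Icc_exp_mul_I_eq {c : ℂ} (hc : c ∈ ({1, -1, I, -I} : Set ℂ)) :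
    ∃ θ ∈ Set.Icc (-π) π, exp (θ * I) = c := by
  have hπ := pi_pos
  rcases hc with rfl | rfl | rfl | rfl
  · exact ⟨0, ⟨by linarith, by linarith⟩, by simp⟩
  · exact ⟨π, ⟨by linarith, le_rfl⟩, exp_pi_mul_I⟩
  · refine ⟨π / 2, ⟨by linarith, by linarith⟩, ?_⟩
    rw [exp_mul_I]; push_cast; simp
  · refine ⟨-(π / 2), ⟨by linarith, by linarith⟩, ?_⟩
    rw [exp_mul_I]; push_cast; simp

theorem not_forall_circle_mem_shearMap_image {δ : ℝ} (hδ : δ ≠ 0) (u v : ℂ) :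
    ¬ ∀ θ ∈ Set.Icc (-π) π,
      (u + (δ : ℂ) * exp (θ * I), v) ∈ shearMap δ '' unitPolydisc := by
  intro h
  refine not_forall_norm_sub_add_sq_lt_one (u / δ) v fun c hc => ?_
  obtain ⟨θ, hθ, rfl⟩ := exists_mem_Icc_exp_mul_I_eq hc
  have := norm_sub_div_sq_lt_one_of_mem_image (h θ hθ)
  rwa [add_div, mul_div_cancel_left₀ _ (ofReal_ne_zero.mpr hδ)] at this

lemma circle_mem_closedBall (δ θ : ℝ) (u v : ℂ) :
    ‖u + (δ : ℂ) * exp (θ * I) - u‖ ^ 2 + ‖v - v‖ ^ 2 ≤ δ ^ 2 := by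
  simp [norm_exp_ofReal_mul_I]

/-- **Duren–Rudin counterexample.** For `f(z,w) = (z, w + (z/δ)²)`, no circle
`{(u + δ e^{iθ}, v)}` is contained in `f(Δ²)`; consequently `f(Δ²)` contains no closed
Euclidean ball of radius `δ`. -/
theorem duren_rudin_counterexample (δ : ℝ) (hδ : 0 < δ) :
    (∀ u v : ℂ, ¬ ∀ θ ∈ Set.Icc (-π) π,
      (u + (δ : ℂ) * Complex.exp (θ * Complex.I), v) ∈
        (fun x : ℂ × ℂ => (x.1, x.2 + (x.1 / (δ : ℂ)) ^ 2)) ''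
          {x : ℂ × ℂ | ‖x.1‖ < 1 ∧ ‖x.2‖ < 1}) ∧
    (∀ u v : ℂ,
      ¬ ({p : ℂ × ℂ | ‖p.1 - u‖ ^ 2 + ‖p.2 - v‖ ^ 2 ≤ δ ^ 2} ⊆
        (fun x : ℂ × ℂ => (x.1, x.2 + (x.1 / (δ : ℂ)) ^ 2)) ''
          {x : ℂ × ℂ | ‖x.1‖ < 1 ∧ ‖x.2‖ < 1})) :=
  ⟨not_forall_circle_mem_shearMap_image hδ.ne', fun u v hsub =>
    not_forall_circle_mem_shearMap_image hδ.ne' u v fun θ _ =>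
      hsub (circle_mem_closedBall δ θ u v)⟩
end

section
/- Let Ω ⊆ ℂ^k be an open set containing 0, let Ψ : Ω → ℂ^k and Φ_n : Ω → ℂ^k be holomorphic maps such that Φ_n → Ψ locally uniformly on Ω and the derivative Ψ'(0) is invertible. Then there exist r > 0 and N such that for all n ≥ N the image Φ_n(Ω) contains the open Euclidean ball B(Ψ(0), r). -/
/-!
The one-variable Cauchy estimate, applied on complex lines, bounds the derivative of a holomorphic
map at a point by its supremum on a ball around it. Applied to `w ↦ f (y + w) - f (z + w)`, it
shows that holomorphic maps have continuous, hence strict, derivatives, so `Ψ - Ψ'(0)` has a small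
Lipschitz constant near `0`; applied to `Φₙ - Ψ`, which is uniformly small near `0` for large `n`,
it gives the same for `Φₙ - Ψ'(0)`. A map so close to the surjective linear map `Ψ'(0)` covers a
ball of explicit radius (by the iteration behind the inverse function theorem), and this radius
does not depend on `n`.
-/

open Metric Filter Topology Set NNReal

theorem ApproximatesLinearOn.of_lipschitzOnWith_sub {𝕜 : Type*} [NontriviallyNormedField 𝕜]
    {G H : Type*} [NormedAddCommGroup G] [NormedSpace 𝕜 G] [NormedAddCommGroup H]
    [NormedSpace 𝕜 H] {f g : G → H} {f' : G →L[𝕜] H} {s : Set G} {c d : ℝ≥0}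
    (hf : ApproximatesLinearOn f f' s c) (hg : LipschitzOnWith d (g - f) s) :
    ApproximatesLinearOn g f' s (c + d) := by
  rw [approximatesLinearOn_iff_lipschitzOnWith] at hf ⊢
  have hsum := hf.add hg
  simp only [Pi.sub_apply, sub_add_sub_cancel'] at hsum
  exact hsum

theorem TendstoLocallyUniformlyOn.eventually_forall_norm_sub_le {ι α β : Type*}
    [TopologicalSpace α] [LocallyCompactSpace α] [SeminormedAddCommGroup β] {F : ι → α → β}
    {f : α → β} {p : Filter ι} {s K : Set α} (h : TendstoLocallyUniformlyOn F f p s)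
    (hs : IsOpen s) (hKs : K ⊆ s) (hK : IsCompact K) {δ : ℝ} (hδ : 0 < δ) :
    ∀ᶠ n in p, ∀ w ∈ K, ‖F n w - f w‖ ≤ δ := by
  filter_upwards [Metric.tendstoUniformlyOn_iff.1
    ((tendstoLocallyUniformlyOn_iff_forall_isCompact hs).1 h K hKs hK) δ hδ] with n hn w hw
  rw [← dist_eq_norm, dist_comm]
  exact (hn w hw).le

section Holomorphic

variable {E F : Type*} [NormedAddCommGroup E] [NormedSpace ℂ E]
  [NormedAddCommGroup F] [NormedSpace ℂ F]

theorem norm_fderiv_le_of_forall_mem_sphere_norm_le {g : E → F} {z : E} {ρ δ : ℝ} (hρ : 0 < ρ)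
    (hδ : 0 ≤ δ) (hg : DiffContOnCl ℂ g (ball z ρ)) (hbound : ∀ w ∈ sphere z ρ, ‖g w‖ ≤ δ) :
    ‖fderiv ℂ g z‖ ≤ δ / ρ := by
  refine ContinuousLinearMap.opNorm_le_bound' _ (by positivity) fun v hv₀ => ?_
  have hv : 0 < ‖v‖ := (norm_nonneg v).lt_of_ne' hv₀
  set line : ℂ → E := fun t => z + t • v
  have dist_line (t : ℂ) : dist (line t) z = ‖t‖ * ‖v‖ := by
    rw [dist_eq_norm, add_sub_cancel_left, norm_smul]
  have hline : HasDerivAt line v 0 := by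
    simpa only [id, one_smul] using ((hasDerivAt_id (0 : ℂ)).smul_const v).const_add z
  have hmaps : MapsTo line (ball 0 (ρ / ‖v‖)) (ball z ρ) := fun t ht => by
    rw [mem_ball_zero_iff, lt_div_iff₀ hv] at ht
    rwa [mem_ball, dist_line]
  have hgline : DiffContOnCl ℂ (g ∘ line) (ball 0 (ρ / ‖v‖)) :=
    hg.comp (by fun_prop : Differentiable ℂ line).diffContOnCl hmaps
  have hderiv : HasDerivAt (g ∘ line) (fderiv ℂ g z v) 0 := by
    have hgz : HasFDerivAt g (fderiv ℂ g (line 0)) (line 0) := by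
      simpa [line] using (hg.differentiableAt isOpen_ball (mem_ball_self hρ)).hasFDerivAt
    simpa [line] using hgz.comp_hasDerivAt 0 hline
  have hsphere : ∀ t ∈ sphere (0 : ℂ) (ρ / ‖v‖), ‖(g ∘ line) t‖ ≤ δ := fun t ht => by
    rw [mem_sphere_zero_iff_norm] at ht
    exact hbound _ (by rw [mem_sphere, dist_line, ht, div_mul_cancel₀ _ hv.ne'])
  calc ‖fderiv ℂ g z v‖ = ‖deriv (g ∘ line) 0‖ := by rw [hderiv.deriv]
    _ ≤ δ / (ρ / ‖v‖) :=
        Complex.norm_deriv_le_of_forall_mem_sphere_norm_le (by positivity) hgline hsphere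
    _ = δ / ρ * ‖v‖ := by field_simp

theorem lipschitzOnWith_closedBall_of_forall_norm_le {g : E → F} {x : E} {r ρ : ℝ} {K : ℝ≥0}
    (hρ : 0 < ρ) (hg : DiffContOnCl ℂ g (ball x (r + ρ)))
    (hbound : ∀ w ∈ closedBall x (r + ρ), ‖g w‖ ≤ K * ρ) :
    LipschitzOnWith K g (closedBall x r) := by
  refine (convex_closedBall x r).lipschitzOnWith_of_nnnorm_fderiv_le (𝕜 := ℂ) (fun z hz => ?_)
    fun z hz => ?_
  all_goals have hzx : ρ + dist z x ≤ r + ρ := by linarith [mem_closedBall.1 hz]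
  · exact hg.differentiableAt isOpen_ball (ball_subset_ball' hzx (mem_ball_self hρ))
  · have := norm_fderiv_le_of_forall_mem_sphere_norm_le hρ (by positivity)
      (hg.mono (ball_subset_ball' hzx))
      fun w hw => hbound w (closedBall_subset_closedBall' hzx (sphere_subset_closedBall hw))
    rwa [mul_div_cancel_right₀ _ hρ.ne', ← coe_nnnorm, NNReal.coe_le_coe] at this

theorem norm_fderiv_sub_fderiv_le_of_lipschitzOnWith {f : E → F} {x y z : E} {r ρ : ℝ}
    {K : ℝ≥0} (hρ : 0 < ρ) (hf : DiffContOnCl ℂ f (ball x (r + ρ)))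
    (hlip : LipschitzOnWith K f (closedBall x (r + ρ)))
    (hy : y ∈ closedBall x r) (hz : z ∈ closedBall x r) :
    ‖fderiv ℂ f y - fderiv ℂ f z‖ ≤ K / ρ * ‖y - z‖ := by
  have hshift {u w : E} (hu : u ∈ closedBall x r) : dist (u + w) x ≤ ‖w‖ + r := by
    calc dist (u + w) x ≤ dist (u + w) u + dist u x := dist_triangle _ _ _
      _ ≤ ‖w‖ + r := by rw [dist_self_add_left]; linarith [mem_closedBall.1 hu]
  have hmaps {u : E} (hu : u ∈ closedBall x r) : MapsTo (u + ·) (ball 0 ρ) (ball x (r + ρ)) :=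
    fun w hw => by
      rw [mem_ball_zero_iff] at hw
      exact mem_ball.2 (by linarith [hshift (w := w) hu])
  have hdiff {u : E} (hu : u ∈ closedBall x r) :
      DiffContOnCl ℂ (fun w => f (u + w)) (ball 0 ρ) :=
    hf.comp (by fun_prop : Differentiable ℂ (u + ·)).diffContOnCl (hmaps hu)
  have hderiv {u : E} (hu : u ∈ closedBall x r) :
      HasFDerivAt (fun w => f (u + w)) (fderiv ℂ f u) 0 :=
    ((hdiff hu).differentiableAt isOpen_ball (mem_ball_self hρ)).hasFDerivAt.congr_fderiv
      (by rw [fderiv_comp_add_left, add_zero])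
  have hsphere : ∀ w ∈ sphere (0 : E) ρ, ‖f (y + w) - f (z + w)‖ ≤ K * ‖y - z‖ := fun w hw => by
    rw [mem_sphere_zero_iff_norm] at hw
    have hmem {u : E} (hu : u ∈ closedBall x r) : u + w ∈ closedBall x (r + ρ) :=
      mem_closedBall.2 (by linarith [hshift (w := w) hu])
    simpa only [add_sub_add_right_eq_sub] using hlip.norm_sub_le (hmem hy) (hmem hz)
  have := norm_fderiv_le_of_forall_mem_sphere_norm_le hρ (by positivity)
    ((hdiff hy).sub (hdiff hz)) hsphere
  rw [((hderiv hy).sub (hderiv hz)).fderiv] at this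
  rwa [div_mul_eq_mul_div]

theorem DifferentiableOn.continuousAt_fderiv {f : E → F} {s : Set E} {x : E}
    (hf : DifferentiableOn ℂ f s) (hs : s ∈ 𝓝 x) : ContinuousAt (fderiv ℂ f) x := by
  have hnear : s ∩ f ⁻¹' closedBall (f x) 1 ∈ 𝓝 x :=
    inter_mem hs ((hf.differentiableAt hs).continuousAt.preimage_mem_nhds
      (closedBall_mem_nhds _ one_pos))
  obtain ⟨R, hR, hRsub⟩ := nhds_basis_closedBall.mem_iff.1 hnear
  obtain ⟨ρ, hρ, hsub⟩ : ∃ ρ > 0, closedBall x (ρ + ρ + ρ) ⊆ s ∩ f ⁻¹' closedBall (f x) 1 :=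
    ⟨R / 3, by positivity, by convert hRsub using 2; ring⟩
  set K : ℝ≥0 := ⟨ρ⁻¹, (inv_pos.2 hρ).le⟩
  have hosc : LipschitzOnWith K (fun w => f w - f x) (closedBall x (ρ + ρ)) :=
    lipschitzOnWith_closedBall_of_forall_norm_le hρ
      ((hf.sub_const (f x)).diffContOnCl_ball (hsub.trans inter_subset_left)) fun w hw => by
        rw [show (K : ℝ) * ρ = 1 from inv_mul_cancel₀ hρ.ne', ← dist_eq_norm]
        exact (hsub hw).2
  have hlip : LipschitzOnWith K f (closedBall x (ρ + ρ)) :=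
    LipschitzOnWith.of_dist_le_mul fun a ha b hb => by
      simpa [dist_eq_norm] using hosc.dist_le_mul a ha b hb
  refine continuousAt_of_locally_lipschitz hρ (K / ρ) fun y hy => ?_
  simpa only [dist_eq_norm] using norm_fderiv_sub_fderiv_le_of_lipschitzOnWith hρ
    (hf.diffContOnCl_ball ((closedBall_subset_closedBall (by linarith)).trans
      (hsub.trans inter_subset_left))) hlip (mem_closedBall.2 hy.le) (mem_closedBall_self hρ.le)

theorem DifferentiableOn.hasStrictFDerivAt {f : E → F} {s : Set E} {x : E}
    (hf : DifferentiableOn ℂ f s) (hs : s ∈ 𝓝 x) : HasStrictFDerivAt f (fderiv ℂ f x) x :=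
  hasStrictFDerivAt_of_hasFDerivAt_of_continuousAt
    ((eventually_mem_nhds_iff.2 hs).mono fun _ hy => (hf.differentiableAt hy).hasFDerivAt)
    (hf.continuousAt_fderiv hs)

theorem closedBall_subset_image_of_approximatesLinearOn_of_norm_sub_le [CompleteSpace E]
    {Ψ Φ : E → F} {A : E →L[ℂ] F} (M : A.NonlinearRightInverse) {x : E} {ε : ℝ} {c : ℝ≥0}
    (hε : 0 < ε) (hΨ : ApproximatesLinearOn Ψ A (closedBall x ε) c)
    (hdiff : DiffContOnCl ℂ (Φ - Ψ) (ball x (ε + ε)))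
    (hclose : ∀ w ∈ closedBall x (ε + ε), ‖Φ w - Ψ w‖ ≤ c * ε) :
    closedBall (Ψ x) (((M.nnnorm : ℝ)⁻¹ - 3 * c) * ε) ⊆ Φ '' closedBall x ε := by
  have hΦ : ApproximatesLinearOn Φ A (closedBall x ε) (c + c) :=
    hΨ.of_lipschitzOnWith_sub (lipschitzOnWith_closedBall_of_forall_norm_le hε hdiff hclose)
  have hcenter : ‖Φ x - Ψ x‖ ≤ c * ε := hclose x (mem_closedBall_self (by positivity))
  refine (closedBall_subset_closedBall' ?_).trans
    (hΦ.surjOn_closedBall_of_nonlinearRightInverse M hε.le subset_rfl)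
  rw [dist_comm, dist_eq_norm]
  push_cast
  linarith

end Holomorphic

/-- **Rouché/Hurwitz step in the proof of Landau's theorem.** If holomorphic maps
`Φₙ : Ω → ℂᵏ` converge locally uniformly on the open set `Ω ∋ 0` to `Ψ` with `Ψ'(0)`
invertible, then eventually the images `Φₙ(Ω)` contain a fixed ball centered at `Ψ(0)`. -/
theorem images_contain_ball_of_locally_uniform_limit (k : ℕ)
    (Ω : Set (EuclideanSpace ℂ (Fin k))) (hΩ : IsOpen Ω)
    (h0 : (0 : EuclideanSpace ℂ (Fin k)) ∈ Ω)
    (Ψ : EuclideanSpace ℂ (Fin k) → EuclideanSpace ℂ (Fin k))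
    (Φ : ℕ → EuclideanSpace ℂ (Fin k) → EuclideanSpace ℂ (Fin k))
    (hΨ : DifferentiableOn ℂ Ψ Ω)
    (hΦ : ∀ n, DifferentiableOn ℂ (Φ n) Ω)
    (hconv : TendstoLocallyUniformlyOn Φ Ψ atTop Ω)
    (hinv : IsUnit (fderiv ℂ Ψ 0)) :
    ∃ r > (0 : ℝ), ∃ N : ℕ, ∀ n ≥ N, ball (Ψ 0) r ⊆ Φ n '' Ω := by
  set A := fderiv ℂ Ψ 0
  have hsurj : A.range = ⊤ :=
    LinearMap.range_eq_top.2 (ContinuousLinearMap.isUnit_iff_bijective.1 hinv).surjective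
  set M := A.nonlinearRightInverseOfSurjective hsurj
  set c : ℝ≥0 := M.nnnorm⁻¹ / 4
  have hc : 0 < c := by
    have := A.nonlinearRightInverseOfSurjective_nnnorm_pos hsurj
    positivity
  obtain ⟨s, hs, hΨs⟩ :=
    (hΨ.hasStrictFDerivAt (hΩ.mem_nhds h0)).approximates_deriv_on_nhds (Or.inr hc)
  obtain ⟨ε, hε, hεΩ, hεs⟩ : ∃ ε > 0, closedBall 0 (ε + ε) ⊆ Ω ∧ closedBall 0 ε ⊆ s := by
    obtain ⟨R, hR, hRsub⟩ := nhds_basis_closedBall.mem_iff.1 (inter_mem (hΩ.mem_nhds h0) hs)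
    refine ⟨R / 2, by positivity, by rw [add_halves]; exact hRsub.trans inter_subset_left, ?_⟩
    exact (closedBall_subset_closedBall (by linarith)).trans (hRsub.trans inter_subset_right)
  obtain ⟨N, hN⟩ := eventually_atTop.1 (hconv.eventually_forall_norm_sub_le hΩ hεΩ
    (isCompact_closedBall _ _) (show 0 < (c : ℝ) * ε by positivity))
  have hradius : ((M.nnnorm : ℝ)⁻¹ - 3 * c) * ε = c * ε := by
    simp only [c, NNReal.coe_div, NNReal.coe_inv, NNReal.coe_ofNat]
    ring
  refine ⟨c * ε, by positivity, N, fun n hn => ?_⟩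
  calc ball (Ψ 0) (c * ε) ⊆ closedBall (Ψ 0) (((M.nnnorm : ℝ)⁻¹ - 3 * c) * ε) :=
        hradius ▸ ball_subset_closedBall
    _ ⊆ Φ n '' closedBall 0 ε :=
        closedBall_subset_image_of_approximatesLinearOn_of_norm_sub_le M hε (hΨs.mono_set hεs)
          (((hΦ n).sub hΨ).diffContOnCl_ball hεΩ) (hN n hn)
    _ ⊆ Φ n '' Ω := image_mono ((closedBall_subset_closedBall (by linarith)).trans hεΩ)
end

section
/- Fix real numbers 0 < δ < η and a nonzero c ∈ ℂ. For b ∈ ℂ define g_b : ℂ² → ℂ² by g_b(z, w) = h_b(e^{cz} − 1, e^{cw} − 1), where h_b(z, w) = (z² + b w, z). Then there exists a constant C > 0, depending only on δ, η and c, such that for every b with δ < |b| ≤ η and every (z, w) in the open unit ball of ℂ², the derivative g_b'(z, w) is invertible and ‖g_b'(z, w)‖ · ‖g_b'(z, w)⁻¹‖ ≤ C. -/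
/-!
By the chain rule, `g_b'(z, w)` is the matrix `!![2 (e^{cz} - 1) c e^{cz}, b c e^{cw}; c e^{cz}, 0]`,
of determinant `-b c² e^{cz} e^{cw}`. On the unit ball `e^{-|c|} ≤ |e^{cz}|, |e^{cw}| ≤ e^{|c|}`, so
the entries are bounded above and `|det| ≥ δ |c|² e^{-2|c|}`. For a `2 × 2` matrix
`A⁻¹ = adj A / det A`, and `adj A` has the entries of `A` up to sign and position; bounding both
operator norms by the sum of the absolute values of the entries gives
`‖A‖ ‖A⁻¹‖ ≤ (∑ |aᵢⱼ|)² / |det A|`.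
-/

open Metric

/-- The composition `g_b = h_b ∘ (e^{cz} - 1, e^{cw} - 1)` of the Hénon map
`h_b(z,w) = (z² + b w, z)` with the exponential map, as a self-map of `ℂ²`
(realized as `EuclideanSpace ℂ (Fin 2)`). -/
noncomputable def henonExpMap (c b : ℂ) :
    EuclideanSpace ℂ (Fin 2) → EuclideanSpace ℂ (Fin 2) := fun p =>
  (EuclideanSpace.equiv (Fin 2) ℂ).symm
    ![(Complex.exp (c * p 0) - 1) ^ 2 + b * (Complex.exp (c * p 1) - 1),
      Complex.exp (c * p 0) - 1]

theorem map_ringInverse_of_isUnit {M N F : Type*} [MonoidWithZero M] [MonoidWithZero N]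
    [FunLike F M N] [MonoidHomClass F M N] (f : F) {a : M} (ha : IsUnit a) :
    Ring.inverse (f a) = f (Ring.inverse a) := by
  obtain ⟨u, rfl⟩ := ha
  rw [Ring.inverse_unit]
  exact Ring.inverse_unit (Units.map (f : M →* N) u)

namespace Matrix

section

variable {𝕜 n : Type*} [RCLike 𝕜] [Fintype n] [DecidableEq n]

lemma norm_toEuclideanCLM_single_le (i j : n) (a : 𝕜) :
    ‖toEuclideanCLM (n := n) (𝕜 := 𝕜) (single i j a)‖ ≤ ‖a‖ := by
  refine ContinuousLinearMap.opNorm_le_bound _ (norm_nonneg a) fun x => ?_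
  have hx : toEuclideanCLM (n := n) (𝕜 := 𝕜) (single i j a) x = PiLp.single 2 i (a * x j) := by
    ext k
    simp [single_mulVec, Function.update_apply]
  rw [hx, PiLp.norm_single, norm_mul]
  gcongr
  exact PiLp.norm_apply_le x j

lemma norm_toEuclideanCLM_le_sum_norm (A : Matrix n n 𝕜) :
    ‖toEuclideanCLM (n := n) (𝕜 := 𝕜) A‖ ≤ ∑ i, ∑ j, ‖A i j‖ := by
  conv_lhs => rw [matrix_eq_sum_single A]
  simp only [map_sum]
  refine (norm_sum_le _ _).trans (Finset.sum_le_sum fun i _ => ?_)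
  exact (norm_sum_le _ _).trans (Finset.sum_le_sum fun j _ => norm_toEuclideanCLM_single_le i j _)

end

variable {𝕜 : Type*} [RCLike 𝕜]

lemma sum_norm_adjugate_fin_two (A : Matrix (Fin 2) (Fin 2) 𝕜) :
    ∑ i, ∑ j, ‖A.adjugate i j‖ = ∑ i, ∑ j, ‖A i j‖ := by
  simp only [adjugate_fin_two, Fin.sum_univ_two, of_apply, cons_val', cons_val_zero, cons_val_one,
    empty_val', cons_val_fin_one, norm_neg]
  ring

lemma isUnit_toEuclideanCLM_and_norm_mul_norm_ringInverse_le (A : Matrix (Fin 2) (Fin 2) 𝕜)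
    (hA : A.det ≠ 0) :
    IsUnit (toEuclideanCLM (n := Fin 2) (𝕜 := 𝕜) A) ∧
      ‖toEuclideanCLM (n := Fin 2) (𝕜 := 𝕜) A‖ *
          ‖Ring.inverse (toEuclideanCLM (n := Fin 2) (𝕜 := 𝕜) A)‖ ≤
        (∑ i, ∑ j, ‖A i j‖) ^ 2 / ‖A.det‖ := by
  have hunit : IsUnit A := (isUnit_iff_isUnit_det A).2 hA.isUnit
  refine ⟨hunit.map _, ?_⟩
  rw [map_ringInverse_of_isUnit _ hunit, ← nonsing_inv_eq_ringInverse, inv_def,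
    Ring.inverse_eq_inv', map_smul, norm_smul, norm_inv]
  calc _ ≤ (∑ i, ∑ j, ‖A i j‖) * (‖A.det‖⁻¹ * ∑ i, ∑ j, ‖A i j‖) := by
        gcongr
        · exact norm_toEuclideanCLM_le_sum_norm A
        · exact (norm_toEuclideanCLM_le_sum_norm _).trans (sum_norm_adjugate_fin_two A).le
    _ = _ := by ring

end Matrix

lemma Complex.exp_neg_le_norm_exp_of_norm_le {w : ℂ} {r : ℝ} (h : ‖w‖ ≤ r) :
    Real.exp (-r) ≤ ‖Complex.exp w‖ := by
  rw [Complex.norm_exp, Real.exp_le_exp]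
  linarith [neg_abs_le w.re, Complex.abs_re_le_norm w]

lemma Complex.norm_exp_le_exp_of_norm_le {w : ℂ} {r : ℝ} (h : ‖w‖ ≤ r) :
    ‖Complex.exp w‖ ≤ Real.exp r :=
  (Complex.norm_exp_le_exp_norm w).trans (Real.exp_le_exp.2 h)

section

variable {ι : Type*} [Fintype ι]

lemma EuclideanSpace.norm_mul_apply_le_of_norm_le_one {𝕜 : Type*} [RCLike 𝕜] (c : 𝕜)
    {p : EuclideanSpace 𝕜 ι} (hp : ‖p‖ ≤ 1) (i : ι) :
    ‖c * p i‖ ≤ ‖c‖ := by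
  rw [norm_mul]
  exact mul_le_of_le_one_right (norm_nonneg c) ((PiLp.norm_apply_le p i).trans hp)

lemma hasFDerivAt_cexp_const_mul_apply_sub_one (c : ℂ) (i : ι) (p : EuclideanSpace ℂ ι) :
    HasFDerivAt (fun q : EuclideanSpace ℂ ι => Complex.exp (c * q i) - 1)
      ((c * Complex.exp (c * p i)) • EuclideanSpace.proj (𝕜 := ℂ) i) p := by
  have := ((PiLp.hasFDerivAt_apply (𝕜 := ℂ) 2 p i).const_mul c).cexp.sub_const 1
  rwa [smul_smul, mul_comm] at this

end

open Complex Matrix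

noncomputable def henonExpJacobian (c b : ℂ) (p : EuclideanSpace ℂ (Fin 2)) :
    Matrix (Fin 2) (Fin 2) ℂ :=
  !![2 * (exp (c * p 0) - 1) * (c * exp (c * p 0)), b * (c * exp (c * p 1));
     c * exp (c * p 0), 0]

lemma hasFDerivAt_henonExpMap (c b : ℂ) (p : EuclideanSpace ℂ (Fin 2)) :
    HasFDerivAt (henonExpMap c b)
      (toEuclideanCLM (n := Fin 2) (𝕜 := ℂ) (henonExpJacobian c b p)) p := by
  rw [← hasFDerivWithinAt_univ, hasFDerivWithinAt_piLp]
  intro i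
  rw [hasFDerivWithinAt_univ]
  have h0 := hasFDerivAt_cexp_const_mul_apply_sub_one c 0 p
  have h1 := hasFDerivAt_cexp_const_mul_apply_sub_one c 1 p
  fin_cases i
  · refine ((h0.pow 2).add (h1.const_mul b)).congr_fderiv ?_
    ext x
    simp only [Fin.isValue, Nat.add_one_sub_one, pow_one, nsmul_eq_mul, Nat.cast_ofNat,
      _root_.add_apply, _root_.smul_apply, PiLp.proj_apply, smul_eq_mul,
      Fin.zero_eta, henonExpJacobian, ContinuousLinearMap.comp_apply, ofLp_toEuclideanCLM, mulVec,
      dotProduct, of_apply, cons_val', cons_val_fin_one, cons_val_zero, Fin.sum_univ_two,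
      cons_val_one]
    ring
  · refine h0.congr_fderiv ?_
    ext x
    simp [henonExpJacobian, mulVec, dotProduct, Fin.sum_univ_two]

lemma det_henonExpJacobian (c b : ℂ) (p : EuclideanSpace ℂ (Fin 2)) :
    (henonExpJacobian c b p).det = -(b * c ^ 2 * exp (c * p 0) * exp (c * p 1)) := by
  rw [henonExpJacobian, det_fin_two_of]
  ring

lemma sum_norm_henonExpJacobian_le (c : ℂ) {b : ℂ} {η : ℝ} (hb : ‖b‖ ≤ η)
    {p : EuclideanSpace ℂ (Fin 2)} (hp : ‖p‖ ≤ 1) :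
    ∑ i, ∑ j, ‖henonExpJacobian c b p i j‖ ≤
      ‖c‖ * Real.exp ‖c‖ * (2 * Real.exp ‖c‖ + 3 + η) := by
  have hE0 : ‖exp (c * p 0)‖ ≤ Real.exp ‖c‖ :=
    norm_exp_le_exp_of_norm_le (EuclideanSpace.norm_mul_apply_le_of_norm_le_one c hp 0)
  have hE1 : ‖exp (c * p 1)‖ ≤ Real.exp ‖c‖ :=
    norm_exp_le_exp_of_norm_le (EuclideanSpace.norm_mul_apply_le_of_norm_le_one c hp 1)
  have hE0_sub_one : ‖exp (c * p 0) - 1‖ ≤ Real.exp ‖c‖ + 1 :=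
    norm_sub_le_of_le hE0 norm_one.le
  have hη : 0 ≤ η := (norm_nonneg b).trans hb
  simp only [henonExpJacobian, Fin.sum_univ_two, of_apply, cons_val', cons_val_zero,
    cons_val_one, empty_val', cons_val_fin_one, norm_zero, add_zero, norm_mul, Complex.norm_ofNat]
  calc _ ≤ 2 * (Real.exp ‖c‖ + 1) * (‖c‖ * Real.exp ‖c‖) + η * (‖c‖ * Real.exp ‖c‖) +
        ‖c‖ * Real.exp ‖c‖ := by gcongr
    _ = _ := by ring

lemma le_norm_det_henonExpJacobian (c : ℂ) {b : ℂ} {δ : ℝ} (hb : δ ≤ ‖b‖)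
    {p : EuclideanSpace ℂ (Fin 2)} (hp : ‖p‖ ≤ 1) :
    δ * ‖c‖ ^ 2 * Real.exp (-‖c‖) ^ 2 ≤ ‖(henonExpJacobian c b p).det‖ := by
  have hE : ∀ i, Real.exp (-‖c‖) ≤ ‖exp (c * p i)‖ := fun i =>
    exp_neg_le_norm_exp_of_norm_le (EuclideanSpace.norm_mul_apply_le_of_norm_le_one c hp i)
  rw [det_henonExpJacobian, norm_neg, norm_mul, norm_mul, norm_mul, norm_pow, pow_two, pow_two,
    ← mul_assoc]
  gcongr
  · exact hE 0
  · exact hE 1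

/-- **Example 3.2.** For `δ < |b| ≤ η` and `c ≠ 0`, the family
`g_b(z,w) = h_b(e^{cz} - 1, e^{cw} - 1)` of composed Hénon maps satisfies, on the open
unit ball of `ℂ²`, a uniform distortion bound `‖g_b'(z,w)‖ ⬝ ‖g_b'(z,w)⁻¹‖ ≤ C` with `C`
depending only on `δ, η, c`. -/
theorem henon_family_satisfies_distortion_bound (δ η : ℝ) (hδ : 0 < δ) (hδη : δ < η)
    (c : ℂ) (hc : c ≠ 0) :
    ∃ C : ℝ, 0 < C ∧ ∀ b : ℂ, δ < ‖b‖ → ‖b‖ ≤ η →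
      ∀ p ∈ ball (0 : EuclideanSpace ℂ (Fin 2)) 1,
        IsUnit (fderiv ℂ (henonExpMap c b) p) ∧
        ‖fderiv ℂ (henonExpMap c b) p‖ * ‖Ring.inverse (fderiv ℂ (henonExpMap c b) p)‖ ≤ C := by
  have hη : 0 < η := hδ.trans hδη
  refine ⟨(‖c‖ * Real.exp ‖c‖ * (2 * Real.exp ‖c‖ + 3 + η)) ^ 2 /
      (δ * ‖c‖ ^ 2 * Real.exp (-‖c‖) ^ 2), by positivity, fun b hbδ hbη p hp => ?_⟩
  have hp_norm : ‖p‖ ≤ 1 := (mem_ball_zero_iff.1 hp).le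
  have hdet := le_norm_det_henonExpJacobian c hbδ.le hp_norm
  have hdet_pos : 0 < δ * ‖c‖ ^ 2 * Real.exp (-‖c‖) ^ 2 := by positivity
  rw [(hasFDerivAt_henonExpMap c b p).fderiv]
  obtain ⟨hunit, hcond⟩ := isUnit_toEuclideanCLM_and_norm_mul_norm_ringInverse_le _
    (norm_pos_iff.1 (hdet_pos.trans_le hdet))
  refine ⟨hunit, hcond.trans ?_⟩
  gcongr
  exact sum_norm_henonExpJacobian_le c hbη hp_norm
end
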